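/- Let (Γ, α) be an abstract GKM graph of valence at least 4 that admits a quaternionic structure. Then Γ is not GKM₄; more precisely, at every vertex v there are four pairwise distinct edges in E_v whose labels are linearly dependent over ℚ. -/

import Mathlib

/-!
The two labels of a quaternionic pair at `v` have lifts summing to a lift of the
quaternionic weight `λ(v)`. Two different quaternionic pairs `{e₁, e₂}`, `{e₃, e₄}`
at `v` therefore have lifts with `α̃(e₁) + α̃(e₂) = α̃(e₃) + α̃(e₄)`, and linear
dependence is insensitive to the signs of the lifts.
-/

namespace GKMQ

/-- `x` equals `y` up to sign (`x` is a "lift" of the class of `y` mod sign). -/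
def PM {m : ℕ} (x y : Fin m → ℤ) : Prop := x = y ∨ x = -y

/-- coefficientwise coercion of an integer vector to `ℚ`. -/
def ratQ {m : ℕ} (x : Fin m → ℤ) : Fin m → ℚ := fun i => (x i : ℚ)

/-- An abstract graph: finite vertex and oriented-edge sets, a fixed-point-free
orientation-reversal involution `bar`, no loops; multiple edges are allowed. -/
structure Graph where
  V : Type
  E : Type
  fintypeV : Fintype V
  fintypeE : Fintype E
  src : E → V
  bar : E → E
  bar_invol : ∀ e, bar (bar e) = e
  bar_ne : ∀ e, bar e ≠ e
  no_loop : ∀ e, src (bar e) ≠ src e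

/-- The terminal vertex of an oriented edge. -/
def Graph.tgt (G : Graph) (e : G.E) : G.V := G.src (G.bar e)

/-- A connection on a graph; `map e` is a bijection `E_{i(e)} → E_{t(e)}` with
`∇_e e = ē` and `∇_{ē} = (∇_e)⁻¹` (its values outside `E_{i(e)}` are irrelevant). -/
structure Connection (G : Graph) where
  map : G.E → G.E → G.E
  map_src : ∀ e f, G.src f = G.src e → G.src (map e f) = G.tgt e
  map_self : ∀ e, map e e = G.bar e
  map_bar : ∀ e f, G.src f = G.src e → map (G.bar e) (map e f) = f

/-- Compatibility of a connection with an edge labeling (mod sign): for every edge `e`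
and `f ∈ E_{i(e)}` there are lifts of the labels of `f` and `∇_e f` differing by an
integer multiple of the label of `e`. -/
def CompatibleConn (G : Graph) {m : ℕ} (label : G.E → (Fin m → ℤ)) (C : Connection G) :
    Prop :=
  ∀ e f, G.src f = G.src e →
    ∃ x y : Fin m → ℤ, PM x (label f) ∧ PM y (label (C.map e f)) ∧
      ∃ c : ℤ, y = x + c • label e

/-- An axial function with values in `ℤ^m` modulo sign; `label` is a choice of
representatives, so that all labels are well defined up to sign. -/
structure Axial (G : Graph) (m : ℕ) where
  label : G.E → (Fin m → ℤ)
  label_bar : ∀ e, PM (label (G.bar e)) (label e)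
  indep₂ : ∀ e f, G.src f = G.src e → e ≠ f →
    LinearIndependent ℚ ![ratQ (label e), ratQ (label f)]
  exists_compat : ∃ C : Connection G, CompatibleConn G label C

/-- The GKM_k condition: at every vertex, any `k` of the labels are linearly
independent over `ℚ`. -/
def Axial.IsGKM {G : Graph} {m : ℕ} (A : Axial G m) (k : ℕ) : Prop :=
  ∀ v : G.V, ∀ s : Finset G.E, (∀ e ∈ s, G.src e = v) → s.card = k →
    LinearIndependent ℚ (fun e : {x // x ∈ s} => ratQ (A.label e.1))

/-- A full quaternionically compatible family of lifts at a vertex `v`: `L` assigns to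
every edge at `v` a lift of its label, `ℓ` is a lift of the quaternionic weight, and the
lifts of each quaternionic pair sum to `ℓ`. -/
def QFam (G : Graph) {m : ℕ} (label : G.E → (Fin m → ℤ)) (lam : G.V → (Fin m → ℤ))
    (qpair : G.E → G.E) (v : G.V) (L : G.E → (Fin m → ℤ)) (ℓ : Fin m → ℤ) : Prop :=
  PM ℓ (lam v) ∧ ∀ e, G.src e = v → PM (L e) (label e) ∧ L e + L (qpair e) = ℓ

/-- A partial family `s` of lifts, together with a lift `ℓ` of the quaternionic weight
at `v`, is quaternionically compatible if it extends to a full family. -/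
def QCompat (G : Graph) {m : ℕ} (label : G.E → (Fin m → ℤ)) (lam : G.V → (Fin m → ℤ))
    (qpair : G.E → G.E) (v : G.V) (s : List (G.E × (Fin m → ℤ))) (ℓ : Fin m → ℤ) :
    Prop :=
  ∃ L, QFam G label lam qpair v L ℓ ∧ ∀ p ∈ s, L p.1 = p.2

/-- Condition (2) in the definition of a quaternionic structure on a GKM graph. -/
def QuatCondTwo (G : Graph) {m : ℕ} (label : G.E → (Fin m → ℤ))
    (lam : G.V → (Fin m → ℤ)) (qpair : G.E → G.E) : Prop :=
  ∃ C : Connection G, CompatibleConn G label C ∧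
    (∀ e f, G.src f = G.src e → C.map e (qpair f) = qpair (C.map e f)) ∧
    ∀ e xe lv, QCompat G label lam qpair (G.src e) [(e, xe)] lv →
      ∃ lw, (∃ c : ℤ, lw = lv + c • label e) ∧
        QCompat G label lam qpair (G.tgt e) [(G.bar e, -xe)] lw ∧
        ∀ f, G.src f = G.src e → ∀ xf,
          QCompat G label lam qpair (G.src e) [(e, xe), (f, xf)] lv →
          ∀ y, PM y (label (C.map e f)) → (∃ c : ℤ, y = xf + c • label e) →
            QCompat G label lam qpair (G.tgt e) [(G.bar e, -xe), (C.map e f, y)] lw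

/-- A quaternionic structure on an abstract GKM graph: a quaternionic weight (mod sign)
at every vertex, and a grouping of the edges at each vertex into quaternionic pairs,
subject to conditions (1) (`pair_sum`) and (2) (`cond₂`). -/
structure QuatStructure (G : Graph) {m : ℕ} (A : Axial G m) where
  lam : G.V → (Fin m → ℤ)
  qpair : G.E → G.E
  qpair_src : ∀ e, G.src (qpair e) = G.src e
  qpair_ne : ∀ e, qpair e ≠ e
  qpair_invol : ∀ e, qpair (qpair e) = e
  pair_sum : ∀ e, ∃ x y : Fin m → ℤ, PM x (A.label e) ∧ PM y (A.label (qpair e)) ∧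
    PM (x + y) (lam (G.src e))
  cond₂ : QuatCondTwo G A.label lam qpair

/-- Auxiliary function: consecutive pairs of edges of a connection path. -/
def connAux (G : Graph) (C : Connection G) (e₁ e₂ : G.E) : ℕ → G.E × G.E
  | 0 => (e₁, e₂)
  | n + 1 =>
    let p := connAux G C e₁ e₂ n
    (p.2, C.map p.2 (G.bar p.1))

/-- The connection path with prescribed first two edges `e₁, e₂` (where `t(e₁) = i(e₂)`):
`g 0 = e₁`, `g 1 = e₂`, `g (k+2) = ∇_{g (k+1)} (bar (g k))`. -/
def connPathFrom (G : Graph) (C : Connection G) (e₁ e₂ : G.E) (k : ℕ) : G.E :=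
  (connAux G C e₁ e₂ k).1

/-- The connection path through two edges `e, f` starting at the same vertex:
`g 0 = e`, `g 1 = ∇_e f`, `g (k+2) = ∇_{g (k+1)} (bar (g k))`. -/
def connPath (G : Graph) (C : Connection G) (e f : G.E) : ℕ → G.E :=
  connPathFrom G C e (C.map e f)

def IsPeriod {α : Type*} (g : ℕ → α) (N : ℕ) : Prop := 0 < N ∧ ∀ k, g (k + N) = g k

/-- `N` is the minimal period of the sequence `g`. -/
def MinPeriod {α : Type*} (g : ℕ → α) (N : ℕ) : Prop :=
  IsPeriod g N ∧ ∀ N', IsPeriod g N' → N ≤ N'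

/-- A 2-face (given by its connection path `g`) is quaternionic if at each of its
vertices the two edges of the face based there form a quaternionic pair. -/
def IsQuatPath (G : Graph) {m : ℕ} {A : Axial G m} (Q : QuatStructure G A)
    (g : ℕ → G.E) : Prop :=
  ∀ k, Q.qpair (g (k + 1)) = G.bar (g k)

/-- A noncomplex triangle: a quaternionic 2-face which is a triangle with labels
`±a, ±λ, ±(λ-a)` and quaternionic weights `±λ, ±(λ-a), ±a` at its three vertices. -/
def IsNoncomplexTriangle (G : Graph) {m : ℕ} {A : Axial G m} (Q : QuatStructure G A)
    (g : ℕ → G.E) : Prop :=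
  MinPeriod g 3 ∧ IsQuatPath G Q g ∧
  ∃ a l : Fin m → ℤ,
    PM (A.label (g 0)) a ∧ PM (A.label (g 1)) l ∧ PM (A.label (g 2)) (l - a) ∧
    PM (Q.lam (G.src (g 0))) l ∧ PM (Q.lam (G.src (g 1))) (l - a) ∧
    PM (Q.lam (G.src (g 2))) a

/-- Hypothesis (H): a GKM₃ graph with quaternionic structure all of whose quaternionic
2-faces are biangles or noncomplex triangles and all of whose complex 2-faces are
triangles or quadrangles. -/
def HypH (G : Graph) {m : ℕ} (A : Axial G m) (Q : QuatStructure G A) : Prop :=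
  A.IsGKM 3 ∧
  ∀ C : Connection G, CompatibleConn G A.label C →
    ∀ e f, G.src f = G.src e → f ≠ e →
      ∀ N, MinPeriod (connPath G C e f) N →
        (IsQuatPath G Q (connPath G C e f) →
          N = 2 ∨ IsNoncomplexTriangle G Q (connPath G C e f)) ∧
        (¬ IsQuatPath G Q (connPath G C e f) → N = 3 ∨ N = 4)

/-- A compatible signed structure on a 2-face with edges `g 0, …, g (N-1)`
(indices mod `N`): lifts `γ k` of the labels `α (g k)` such that consecutive lifts
satisfy the connection congruence and are quaternionically compatible at each vertex. -/
def SignedStructureOn (G : Graph) {m : ℕ} (A : Axial G m) (Q : QuatStructure G A)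
    (g : ℕ → G.E) (N : ℕ) (γ : ℕ → (Fin m → ℤ)) : Prop :=
  (∀ k, γ (k + N) = γ k) ∧
  (∀ k, PM (γ k) (A.label (g k))) ∧
  (∀ k, ∃ c : ℤ, γ (k + 2) + γ k = c • γ (k + 1)) ∧
  (∀ k, ∃ ℓ, QCompat G A.label Q.lam Q.qpair (G.tgt (g k))
      [(G.bar (g k), -(γ k)), (g (k + 1), γ (k + 1))] ℓ)

/-- The raw data of a GKM graph with quaternionic structure: vertices, oriented edges,
labels, quaternionic weights (both as chosen representatives mod sign) and quaternionic
pairs. -/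
structure QData (m : ℕ) where
  V : Type
  E : Type
  src : E → V
  bar : E → E
  label : E → (Fin m → ℤ)
  lam : V → (Fin m → ℤ)
  qpair : E → E

/-- The quaternionic GKM data underlying a GKM graph with quaternionic structure. -/
def toQData (G : Graph) {m : ℕ} (A : Axial G m) (Q : QuatStructure G A) : QData m :=
  ⟨G.V, G.E, G.src, G.bar, A.label, Q.lam, Q.qpair⟩

/-- An isomorphism of GKM graphs with quaternionic structure: bijections of vertices and
oriented edges commuting with `src`, `bar` and the quaternionic pairing, and preserving
the labels and the quaternionic weights up to sign. -/
structure QIso {m : ℕ} (D₁ D₂ : QData m) where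
  vmap : D₁.V ≃ D₂.V
  emap : D₁.E ≃ D₂.E
  src_comm : ∀ e, D₂.src (emap e) = vmap (D₁.src e)
  bar_comm : ∀ e, D₂.bar (emap e) = emap (D₁.bar e)
  label_pm : ∀ e, PM (D₂.label (emap e)) (D₁.label e)
  lam_pm : ∀ v, PM (D₂.lam (vmap v)) (D₁.lam v)
  qpair_comm : ∀ e, D₂.qpair (emap e) = emap (D₁.qpair e)

/-- The model graph `Γ_{ℍP}(λ; β₀, …, β_n)` of a torus action on `ℍPⁿ`: vertices
`0, …, n`, two edges between any two distinct vertices `k, l`, labeled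
`±(β_k - β_l)` and `±(λ - β_k - β_l)`, quaternionic weight `±(λ - 2β_k)` at `k`,
the two edges of each biangle forming a quaternionic pair. -/
def modelHP (n : ℕ) {m : ℕ} (lam₀ : Fin m → ℤ) (β : Fin (n + 1) → (Fin m → ℤ)) :
    QData m where
  V := Fin (n + 1)
  E := {p : Fin (n + 1) × Fin (n + 1) // p.1 ≠ p.2} × Bool
  src e := e.1.1.1
  bar e := (⟨(e.1.1.2, e.1.1.1), Ne.symm e.1.2⟩, e.2)
  label e := if e.2 then lam₀ - β e.1.1.1 - β e.1.1.2 else β e.1.1.1 - β e.1.1.2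
  lam k := lam₀ - (2 : ℤ) • β k
  qpair e := (e.1, !e.2)

/-- The 2-element subset `{i, j}` (`i ≠ j`) realized as a sorted pair. -/
def uPair {n : ℕ} (i j : Fin n) (h : i ≠ j) : {p : Fin n × Fin n // p.1 < p.2} :=
  if hlt : i < j then ⟨(i, j), hlt⟩ else ⟨(j, i), h.lt_or_gt.resolve_left hlt⟩

/-- The model graph `Γ_{Gr}(β₁, …, β_n)` of a torus action on `Gr₂(ℂⁿ)`: vertices the
2-element subsets of `{1, …, n}`; an oriented edge `(i, j, k)` from `{i, j}` to `{i, k}`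
for `j ≠ k`, labeled `±(β_j - β_k)`; quaternionic weight `±(β_i - β_j)` at `{i, j}`;
the edges `(i, j, k)` and `(j, i, k)` forming a quaternionic pair at `{i, j}`. -/
def modelGr (n : ℕ) {m : ℕ} (β : Fin n → (Fin m → ℤ)) : QData m where
  V := {p : Fin n × Fin n // p.1 < p.2}
  E := {t : Fin n × Fin n × Fin n // t.1 ≠ t.2.1 ∧ t.1 ≠ t.2.2 ∧ t.2.1 ≠ t.2.2}
  src e := uPair e.1.1 e.1.2.1 e.2.1
  bar e := ⟨(e.1.1, e.1.2.2, e.1.2.1), e.2.2.1, e.2.1, Ne.symm e.2.2.2⟩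
  label e := β e.1.2.1 - β e.1.2.2
  lam v := β v.1.1 - β v.1.2
  qpair e := ⟨(e.1.2.1, e.1.1, e.1.2.2), Ne.symm e.2.1, e.2.2.2, e.2.2.1⟩

/-- A subgraph (with quaternionic structure) of a GKM graph with quaternionic
structure: sets of vertices and of oriented edges closed under `src`, `bar` and the
quaternionic pairing. -/
structure SubData (G : Graph) {m : ℕ} (A : Axial G m) (Q : QuatStructure G A) where
  W : Set G.V
  F : Set G.E
  src_mem : ∀ e ∈ F, G.src e ∈ W
  bar_mem : ∀ e ∈ F, G.bar e ∈ F
  qpair_mem : ∀ e ∈ F, Q.qpair e ∈ F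

/-- The quaternionic GKM data induced on a subgraph. -/
def SubData.toQData {G : Graph} {m : ℕ} {A : Axial G m} {Q : QuatStructure G A}
    (S : SubData G A Q) : QData m where
  V := S.W
  E := S.F
  src e := ⟨G.src e.1, S.src_mem e.1 e.2⟩
  bar e := ⟨G.bar e.1, S.bar_mem e.1 e.2⟩
  label e := A.label e.1
  lam v := Q.lam v.1
  qpair e := ⟨Q.qpair e.1, S.qpair_mem e.1 e.2⟩

theorem PM.symm {m : ℕ} {x y : Fin m → ℤ} (h : PM x y) : PM y x := by
  rcases h with rfl | rfl
  · exact Or.inl rfl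
  · exact Or.inr (neg_neg y).symm

theorem PM.trans {m : ℕ} {x y z : Fin m → ℤ} (hxy : PM x y) (hyz : PM y z) : PM x z := by
  rcases hxy with rfl | rfl <;> rcases hyz with rfl | rfl
  exacts [Or.inl rfl, Or.inr rfl, Or.inr rfl, Or.inl (neg_neg z)]

theorem PM.neg_left {m : ℕ} {x y : Fin m → ℤ} (h : PM x y) : PM (-x) y := by
  rcases h with rfl | rfl
  · exact Or.inr rfl
  · exact Or.inl (neg_neg y)

theorem ratQ_add {m : ℕ} (x y : Fin m → ℤ) : ratQ (x + y) = ratQ x + ratQ y := by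
  funext i; simp [ratQ]

theorem PM.exists_ratQ_eq_units_smul {m : ℕ} {x y : Fin m → ℤ} (h : PM x y) :
    ∃ u : ℚˣ, ratQ y = u • ratQ x := by
  rcases h.symm with rfl | rfl
  · exact ⟨1, by simp⟩
  · exact ⟨-1, by funext i; simp [ratQ]⟩

theorem linearIndependent_ratQ_iff_of_pm {ι : Type*} {m : ℕ} {x a : ι → Fin m → ℤ}
    (hx : ∀ i, PM (x i) (a i)) :
    LinearIndependent ℚ (ratQ ∘ a) ↔ LinearIndependent ℚ (ratQ ∘ x) := by
  choose u hu using fun i => (hx i).exists_ratQ_eq_units_smul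
  have : ratQ ∘ a = u • (ratQ ∘ x) := funext hu
  rw [this, LinearIndependent.units_smul_iff]

theorem not_linearIndependent_of_add_eq_add {K V : Type*} [Ring K] [Nontrivial K]
    [AddCommGroup V] [Module K V] {v : Fin 4 → V} (h : v 0 + v 1 = v 2 + v 3) :
    ¬ LinearIndependent K v := by
  rw [Fintype.not_linearIndependent_iff]
  refine ⟨![1, 1, -1, -1], ?_, 0, one_ne_zero⟩
  simp [Fin.sum_univ_four, h, ← sub_eq_add_neg]

theorem exists_mem_ne_ne_of_two_lt_ncard {α : Type*} {s : Set α} (hs : 2 < s.ncard)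
    (p : α → α) : ∃ a ∈ s, ∃ b ∈ s, b ≠ a ∧ b ≠ p a := by
  obtain ⟨a, b, c, ha, hb, hc, hab, hac, hbc⟩ :=
    (Set.two_lt_ncard_iff (Set.finite_of_ncard_pos (by omega))).mp hs
  by_cases hpa : b = p a
  · exact ⟨a, ha, c, hc, hac.symm, hpa ▸ hbc.symm⟩
  · exact ⟨a, ha, b, hb, hab.symm, hpa⟩

namespace QuatStructure

variable {G : Graph} {m : ℕ} {A : Axial G m} (Q : QuatStructure G A)

theorem exists_lifts_add_eq_add {e f : G.E} (hfe : G.src f = G.src e) :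
    ∃ x : Fin 4 → Fin m → ℤ,
      (∀ i, PM (x i) (![A.label e, A.label (Q.qpair e), A.label f, A.label (Q.qpair f)] i)) ∧
      x 0 + x 1 = x 2 + x 3 := by
  obtain ⟨x₁, x₂, h₁, h₂, hsum₁₂⟩ := Q.pair_sum e
  obtain ⟨x₃, x₄, h₃, h₄, hsum₃₄⟩ := Q.pair_sum f
  rw [hfe] at hsum₃₄
  rcases hsum₁₂.trans hsum₃₄.symm with hsum | hsum
  · refine ⟨![x₁, x₂, x₃, x₄], ?_, hsum⟩
    intro i; fin_cases i <;> assumption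
  · refine ⟨![x₁, x₂, -x₃, -x₄], ?_, neg_add x₃ x₄ ▸ hsum⟩
    intro i; fin_cases i
    exacts [h₁, h₂, h₃.neg_left, h₄.neg_left]

theorem not_linearIndependent_pairs {e f : G.E} (hfe : G.src f = G.src e) :
    ¬ LinearIndependent ℚ ![ratQ (A.label e), ratQ (A.label (Q.qpair e)),
      ratQ (A.label f), ratQ (A.label (Q.qpair f))] := by
  obtain ⟨x, hx, hsum⟩ := Q.exists_lifts_add_eq_add hfe
  have hcomp : ![ratQ (A.label e), ratQ (A.label (Q.qpair e)), ratQ (A.label f),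
      ratQ (A.label (Q.qpair f))] =
      ratQ ∘ ![A.label e, A.label (Q.qpair e), A.label f, A.label (Q.qpair f)] := by
    funext i; fin_cases i <;> rfl
  rw [hcomp, linearIndependent_ratQ_iff_of_pm hx]
  exact not_linearIndependent_of_add_eq_add
    (by simp only [Function.comp_apply, ← ratQ_add, hsum])

end QuatStructure

/-- An abstract GKM graph of valence at least 4 with a quaternionic structure is never
GKM₄: at every vertex there are four distinct edges with linearly dependent labels. -/
theorem not_GKM4 (G : Graph) {m : ℕ} (A : Axial G m) (Q : QuatStructure G A)
    (hval : ∀ v : G.V, 4 ≤ {e : G.E | G.src e = v}.ncard) :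
    ∀ v : G.V, ∃ e₁ e₂ e₃ e₄ : G.E,
      G.src e₁ = v ∧ G.src e₂ = v ∧ G.src e₃ = v ∧ G.src e₄ = v ∧
      e₁ ≠ e₂ ∧ e₁ ≠ e₃ ∧ e₁ ≠ e₄ ∧ e₂ ≠ e₃ ∧ e₂ ≠ e₄ ∧ e₃ ≠ e₄ ∧
      ¬ LinearIndependent ℚ
        ![ratQ (A.label e₁), ratQ (A.label e₂), ratQ (A.label e₃), ratQ (A.label e₄)] := by
  intro v
  obtain ⟨e, he, f, hf, hfe, hfp⟩ :=
    exists_mem_ne_ne_of_two_lt_ncard (s := {e : G.E | G.src e = v}) (by linarith [hval v])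
      Q.qpair
  have hinj : Function.Injective Q.qpair := Function.Involutive.injective Q.qpair_invol
  refine ⟨e, Q.qpair e, f, Q.qpair f, he, (Q.qpair_src e).trans he, hf,
    (Q.qpair_src f).trans hf, (Q.qpair_ne e).symm, hfe.symm, ?_, hfp.symm, hinj.ne hfe.symm,
    (Q.qpair_ne f).symm, Q.not_linearIndependent_pairs (hf.trans he.symm)⟩
  rintro rfl
  exact hfp (Q.qpair_invol f).symm

end GKMQ
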